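/- Let $3 \le k \le t$ and $\gamma > 0$, and let $H$ be a balanced $t$-partite $k$-graph with classes $V_1, \dots, V_t$ each of size $n$ satisfying $\widetilde{\delta}_{k-1}(H) \ge (1 - (\binom{t-2}{k-1} + 2\binom{t-2}{k-2})^{-1} + \gamma) n$. Then for every $i \in [t]$ and all distinct vertices $u, v \in V_i$, there are at least $(\gamma n)^{t-1}$ legal sets $T$ consisting of one vertex from each class $V_j$ with $j \ne i$, such that both $T \cup \{u\}$ and $T \cup \{v\}$ span copies of the complete $k$-graph $K_t^k$ in $H$. -/

import Mathlib

open Finset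
open scoped Classical

/-- A set of vertices of the `t`-partite vertex set `Fin t × Fin n` is legal if it
meets each class in at most one vertex. -/
def Legal {t n : ℕ} (S : Finset (Fin t × Fin n)) : Prop :=
  ∀ u ∈ S, ∀ v ∈ S, u.1 = v.1 → u = v

/-- `H` is a `t`-partite `k`-uniform hypergraph with classes of size `n`. -/
def IsPartiteKGraph (t n k : ℕ) (H : Finset (Finset (Fin t × Fin n))) : Prop :=
  ∀ e ∈ H, e.card = k ∧ Legal e

/-- The minimum partite codegree of `H` is at least `d`. -/
def CodegGE (t n k : ℕ) (H : Finset (Finset (Fin t × Fin n))) (d : ℝ) : Prop :=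
  ∀ T : Finset (Fin t × Fin n), T.card = k - 1 → Legal T →
    ∀ j : Fin t, (∀ v ∈ T, v.1 ≠ j) →
      d ≤ ((Finset.univ.filter (fun x : Fin n => insert (j, x) T ∈ H)).card : ℝ)

/-- `S` spans a copy of the complete `k`-graph `K_t^k` in `H` (one vertex per class). -/
def SpansClique (t n k : ℕ) (H : Finset (Finset (Fin t × Fin n)))
    (S : Finset (Fin t × Fin n)) : Prop :=
  S.card = t ∧ Legal S ∧ ∀ e ⊆ S, e.card = k → e ∈ H

/-- `M` is a perfect `K_t^k`-matching in `H`. -/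
def IsPerfectKtMatching (t n k : ℕ) (H M : Finset (Finset (Fin t × Fin n))) : Prop :=
  (∀ S ∈ M, SpansClique t n k H S) ∧
  (M : Set (Finset (Fin t × Fin n))).PairwiseDisjoint id ∧
  ∀ v : Fin t × Fin n, ∃ S ∈ M, v ∈ S

/-- `w` is a perfect fractional `K_t^k`-matching of `H`. -/
def IsPerfectFracMatching (t n k : ℕ) (H : Finset (Finset (Fin t × Fin n)))
    (w : Finset (Fin t × Fin n) → ℝ) : Prop :=
  (∀ S, 0 ≤ w S ∧ w S ≤ 1) ∧
  (∀ S, w S ≠ 0 → SpansClique t n k H S) ∧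
  (∀ v : Fin t × Fin n, ∑ S ∈ Finset.univ.filter (fun S => v ∈ S), w S ≤ 1) ∧
  ∑ S : Finset (Fin t × Fin n), w S = (n : ℝ)

/-!
Build the common extension one class at a time. Let `D = C(t-2, k-1) + 2 C(t-2, k-2)`. If a
partial set `S` (at most `t - 2` vertices, legal, avoiding the class of `u` and `v`) already
completes both `u` and `v` to cliques, then a new vertex `(j, x)` keeps this property as soon as it
completes every `(k-1)`-subset of `S ∪ {u}` and of `S ∪ {v}` to an edge. There are at most `D` such
subsets, and by the codegree condition each of them excludes at most `(D⁻¹ - γ) n` vertices of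
`V_j`, so at least `γ D n ≥ γ n` choices of `x` survive. Choices made in a fixed class give
disjoint families of completions, so the count multiplies to `(γ n)^(t-1)`.
-/

section Partite

variable {t n : ℕ}

theorem Legal.subset {S T : Finset (Fin t × Fin n)} (hT : Legal T) (h : S ⊆ T) : Legal S :=
  fun a ha b hb hab => hT a (h ha) b (h hb) hab

theorem Legal.insert {S : Finset (Fin t × Fin n)} {a : Fin t × Fin n} (hS : Legal S)
    (ha : ∀ y ∈ S, y.1 ≠ a.1) : Legal (insert a S) := by
  intro x hx y hy hxy
  rcases mem_insert.1 hx with hx | hx <;> rcases mem_insert.1 hy with hy | hy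
  · rw [hx, hy]
  · exact absurd (hx ▸ hxy).symm (ha y hy)
  · exact absurd (hy ▸ hxy) (ha x hx)
  · exact hS x hx y hy hxy

theorem Legal.card_image_fst {S : Finset (Fin t × Fin n)} (hS : Legal S) :
    #(S.image Prod.fst) = #S :=
  card_image_of_injOn fun a ha b hb hab => hS a ha b hb hab

theorem Legal.card_eq_of_image_fst_eq {T : Finset (Fin t × Fin n)} (hT : Legal T)
    {c : Fin t} (himg : T.image Prod.fst = univ.erase c) : #T = t - 1 := by
  rw [← hT.card_image_fst, himg, card_erase_of_mem (mem_univ c), card_univ, Fintype.card_fin]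

theorem Legal.card_le_sub_two {S : Finset (Fin t × Fin n)} (hS : Legal S) {i j : Fin t}
    (hji : j ≠ i) (hi : ∀ x ∈ S, x.1 ≠ i) (hj : ∀ x ∈ S, x.1 ≠ j) : #S ≤ t - 2 := by
  have : S.image Prod.fst ⊆ (univ.erase i).erase j := fun c hc => by
    obtain ⟨x, hx, rfl⟩ := mem_image.1 hc
    simp [hi x hx, hj x hx]
  have := card_le_card this
  rw [hS.card_image_fst, card_erase_of_mem (mem_erase.2 ⟨hji, mem_univ j⟩),
    card_erase_of_mem (mem_univ i), card_univ, Fintype.card_fin] at this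
  omega

theorem CodegGE.le_card {k : ℕ} {H : Finset (Finset (Fin t × Fin n))} {d : ℝ}
    (hd : CodegGE t n k H d) (hkt : k - 1 < t) (hn : 0 < n) : d ≤ n := by
  let j : Fin t := ⟨0, by omega⟩
  obtain ⟨C, hCj, hC⟩ : ∃ C ⊆ univ.erase j, #C = k - 1 :=
    exists_subset_card_eq (by simp; omega)
  let T := C.image fun c => (c, (⟨0, hn⟩ : Fin n))
  have hT : #T = k - 1 := by rw [card_image_of_injective _ (Prod.mk_left_injective _), hC]
  have hTl : Legal T := by
    simp only [Legal, T, mem_image]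
    rintro _ ⟨a, -, rfl⟩ _ ⟨b, -, rfl⟩ rfl
    rfl
  have hTj : ∀ x ∈ T, x.1 ≠ j := by
    simp only [T, mem_image]
    rintro _ ⟨c, hc, rfl⟩
    exact ne_of_mem_erase (hCj hc)
  calc d ≤ #{x | insert (j, x) T ∈ H} := hd T hT hTl j hTj
    _ ≤ n := by exact_mod_cast (card_filter_le _ _).trans (by simp)

end Partite

theorem card_sub_mul_le_card_filter_forall {α ι : Type*} [Fintype α] (s : Finset ι)
    (p : ι → α → Prop) [∀ i, DecidablePred (p i)] {d : ℝ} (h : ∀ i ∈ s, d ≤ #{x | p i x}) :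
    Fintype.card α - #s * (Fintype.card α - d) ≤ #{x | ∀ i ∈ s, p i x} := by
  have hcompl : #{x | ¬ ∀ i ∈ s, p i x} ≤ ∑ i ∈ s, #{x | ¬ p i x} := by
    refine (card_le_card fun x hx => ?_).trans card_biUnion_le
    push Not at hx
    simpa using hx
  have hterm : ∀ i ∈ s, (#{x | ¬ p i x} : ℝ) ≤ Fintype.card α - d := fun i hi => by
    have : (#{x | p i x} : ℝ) + #{x | ¬ p i x} = Fintype.card α := by
      exact_mod_cast card_filter_add_card_filter_not _
    linarith [h i hi]
  have hsplit : (#{x | ∀ i ∈ s, p i x} : ℝ) + #{x | ¬ ∀ i ∈ s, p i x} = Fintype.card α := by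
    exact_mod_cast card_filter_add_card_filter_not _
  have : (#{x | ¬ ∀ i ∈ s, p i x} : ℝ) ≤ #s * (Fintype.card α - d) :=
    calc _ ≤ ∑ i ∈ s, (#{x | ¬ p i x} : ℝ) := by exact_mod_cast hcompl
      _ ≤ ∑ i ∈ s, (Fintype.card α - d) := sum_le_sum hterm
      _ = _ := by rw [sum_const, nsmul_eq_mul]
  linarith

theorem card_powersetCard_succ_insert_union_le {α : Type*} [DecidableEq α] {S : Finset α}
    {u v : α} (hu : u ∉ S) (hv : v ∉ S) {s : ℕ} (hS : #S ≤ s) (m : ℕ) :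
    #(powersetCard (m + 1) (insert u S) ∪ powersetCard (m + 1) (insert v S)) ≤
      s.choose (m + 1) + 2 * s.choose m := by
  have hinter : powersetCard (m + 1) S ⊆
      powersetCard (m + 1) (insert u S) ∩ powersetCard (m + 1) (insert v S) :=
    subset_inter (powersetCard_mono (subset_insert u S)) (powersetCard_mono (subset_insert v S))
  have := card_union_add_card_inter (powersetCard (m + 1) (insert u S))
    (powersetCard (m + 1) (insert v S))
  have := card_le_card hinter
  have := Nat.choose_le_choose (m + 1) hS
  have := Nat.choose_le_choose m hS
  simp only [card_powersetCard, card_insert_of_notMem hu, card_insert_of_notMem hv,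
    Nat.choose_succ_succ'] at *
  omega

section Cliques

variable {t n : ℕ} (k : ℕ) (H : Finset (Finset (Fin t × Fin n)))

def IsCliqueSet (S : Finset (Fin t × Fin n)) : Prop :=
  ∀ e ⊆ S, #e = k → e ∈ H

def IsCommonExt (i : Fin t) (u v : Fin t × Fin n) (S : Finset (Fin t × Fin n)) : Prop :=
  Legal S ∧ (∀ x ∈ S, x.1 ≠ i) ∧ IsCliqueSet k H (insert u S) ∧ IsCliqueSet k H (insert v S)

variable {k H}

theorem IsCliqueSet.insert {S : Finset (Fin t × Fin n)} (hS : IsCliqueSet k H S)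
    {a : Fin t × Fin n} (ha : ∀ T ∈ powersetCard (k - 1) S, insert a T ∈ H) :
    IsCliqueSet k H (insert a S) := by
  intro e he hek
  by_cases hae : a ∈ e
  · rw [← insert_erase hae]
    refine ha _ (mem_powersetCard.2 ⟨fun x hx => ?_, by rw [card_erase_of_mem hae, hek]⟩)
    exact (mem_insert.1 (he (mem_of_mem_erase hx))).resolve_left (ne_of_mem_erase hx)
  · exact hS e (fun x hx => (mem_insert.1 (he hx)).resolve_left (ne_of_mem_of_not_mem hx hae)) hek

theorem isCommonExt_empty (hk : 2 ≤ k) (i : Fin t) (u v : Fin t × Fin n) :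
    IsCommonExt k H i u v ∅ := by
  have hsingle : ∀ w : Fin t × Fin n, IsCliqueSet k H {w} := fun w e he hek => by
    have := card_le_card he
    simp only [card_singleton] at this
    omega
  exact ⟨by simp [Legal], by simp, hsingle u, hsingle v⟩

end Cliques

theorem sub_mul_le_card_filter_isCommonExt_insert {t n k : ℕ}
    {H : Finset (Finset (Fin t × Fin n))} (hk : 2 ≤ k) {δ : ℝ} (hδ : CodegGE t n k H δ)
    (hδn : δ ≤ n) {i j : Fin t} (hji : j ≠ i) {u v : Fin t × Fin n} (hu : u.1 = i)
    (hv : v.1 = i) {S : Finset (Fin t × Fin n)} (hS : IsCommonExt k H i u v S)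
    (hSj : ∀ x ∈ S, x.1 ≠ j) :
    (n : ℝ) - (((t - 2).choose (k - 1) : ℝ) + 2 * ((t - 2).choose (k - 2) : ℝ)) * (n - δ) ≤
      #{x | IsCommonExt k H i u v (insert (j, x) S)} := by
  obtain ⟨hSl, hSi, hSu, hSv⟩ := hS
  have hlegal : ∀ w : Fin t × Fin n, w.1 = i → Legal (insert w S) := fun w hw =>
    hSl.insert fun y hy => hw ▸ hSi y hy
  have havoid : ∀ w : Fin t × Fin n, w.1 = i → ∀ y ∈ insert w S, y.1 ≠ j := fun w hw y hy => by
    rcases mem_insert.1 hy with rfl | hy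
    · exact hw ▸ hji.symm
    · exact hSj y hy
  have hScard := hSl.card_le_sub_two hji hSi hSj
  set 𝒮 := powersetCard (k - 1) (insert u S) ∪ powersetCard (k - 1) (insert v S)
  have h𝒮 : #𝒮 ≤ (t - 2).choose (k - 1) + 2 * (t - 2).choose (k - 2) := by
    obtain ⟨m, rfl⟩ : ∃ m, k = m + 2 := ⟨k - 2, by omega⟩
    exact card_powersetCard_succ_insert_union_le (fun h => hSi u h hu) (fun h => hSi v h hv)
      hScard m
  have hcodeg : ∀ T ∈ 𝒮, δ ≤ #{x | insert (j, x) T ∈ H} := by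
    intro T hT
    obtain ⟨w, hw, hT⟩ : ∃ w : Fin t × Fin n, w.1 = i ∧ T ∈ powersetCard (k - 1) (insert w S) :=
      (mem_union.1 hT).elim (⟨u, hu, ·⟩) (⟨v, hv, ·⟩)
    obtain ⟨hTw, hTk⟩ := mem_powersetCard.1 hT
    exact hδ T hTk ((hlegal w hw).subset hTw) j fun y hy => havoid w hw y (hTw hy)
  have hgood : ∀ x : Fin n, (∀ T ∈ 𝒮, insert (j, x) T ∈ H) →
      IsCommonExt k H i u v (insert (j, x) S) := fun x hx => by
    refine ⟨hSl.insert hSj, ?_, ?_, ?_⟩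
    · intro y hy
      rcases mem_insert.1 hy with rfl | hy
      · exact hji
      · exact hSi y hy
    · rw [insert_comm]
      exact hSu.insert fun T hT => hx T (mem_union_left _ hT)
    · rw [insert_comm]
      exact hSv.insert fun T hT => hx T (mem_union_right _ hT)
  have hcount := card_sub_mul_le_card_filter_forall 𝒮 (fun T x => insert (j, x) T ∈ H) hcodeg
  rw [Fintype.card_fin] at hcount
  calc _ ≤ (n : ℝ) - #𝒮 * (n - δ) := by gcongr; exact_mod_cast h𝒮
    _ ≤ #{x | ∀ T ∈ 𝒮, insert (j, x) T ∈ H} := by convert hcount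
    _ ≤ _ := Nat.cast_le.2 <| card_le_card fun x hx =>
      mem_filter.2 ⟨mem_univ x, hgood x (mem_filter.1 hx).2⟩

section Counting

variable {t n : ℕ}

noncomputable def extensions (P : Finset (Fin t × Fin n) → Prop) (S : Finset (Fin t × Fin n))
    (J : Finset (Fin t)) : Finset (Finset (Fin t × Fin n)) :=
  {T | P T ∧ S ⊆ T ∧ T.image Prod.fst = S.image Prod.fst ∪ J}

theorem pow_card_le_card_extensions (P : Finset (Fin t × Fin n) → Prop)
    (hP : ∀ S, P S → Legal S) {m : ℝ} (hm : 0 ≤ m) (J : Finset (Fin t))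
    (hext : ∀ S, P S → ∀ j ∈ J, (∀ x ∈ S, x.1 ≠ j) → m ≤ #{x | P (insert (j, x) S)})
    (S : Finset (Fin t × Fin n)) (hS : P S) (hSJ : ∀ x ∈ S, x.1 ∉ J) :
    m ^ #J ≤ #(extensions P S J) := by
  induction J using Finset.induction_on generalizing S with
  | empty =>
    have : S ∈ extensions P S ∅ := mem_filter.2 ⟨mem_univ S, hS, subset_rfl, by simp⟩
    simpa using card_pos.2 ⟨S, this⟩
  | @insert j J hj ih =>
    set g : Finset (Fin n) := {x | P (insert (j, x) S)}
    have hg : m ≤ #g :=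
      hext S hS j (mem_insert_self j J) fun x hx h => hSJ x hx (h ▸ mem_insert_self j J)
    have hpiece : ∀ x ∈ g, m ^ #J ≤ #(extensions P (insert (j, x) S) J) := by
      intro x hx
      refine ih (fun S hS j' hj' => hext S hS j' (mem_insert_of_mem hj')) _ (mem_filter.1 hx).2 ?_
      intro y hy
      rcases mem_insert.1 hy with rfl | hy
      · exact hj
      · exact fun h => hSJ y hy (mem_insert_of_mem h)
    have hdisj : (g : Set (Fin n)).PairwiseDisjoint fun x => extensions P (insert (j, x) S) J := by
      intro x _ y _ hxy
      refine disjoint_left.2 fun T hTx hTy => hxy ?_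
      have hx := (mem_filter.1 hTx).2
      have hy := (mem_filter.1 hTy).2
      exact congrArg Prod.snd
        (hP T hx.1 _ (hx.2.1 (mem_insert_self _ _)) _ (hy.2.1 (mem_insert_self _ _)) rfl)
    have hsub : g.biUnion (fun x => extensions P (insert (j, x) S) J) ⊆
        extensions P S (insert j J) := by
      intro T hT
      obtain ⟨x, -, hT⟩ := mem_biUnion.1 hT
      obtain ⟨-, hPT, hST, himg⟩ := mem_filter.1 hT
      refine mem_filter.2 ⟨mem_univ T, hPT, (subset_insert _ S).trans hST, ?_⟩
      rw [himg, image_insert, insert_union, union_insert]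
    calc m ^ #(insert j J) = m * m ^ #J := by rw [card_insert_of_notMem hj, pow_succ']
      _ ≤ #g * m ^ #J := by gcongr
      _ = ∑ _x ∈ g, m ^ #J := by rw [sum_const, nsmul_eq_mul]
      _ ≤ ∑ x ∈ g, (#(extensions P (insert (j, x) S) J) : ℝ) := sum_le_sum hpiece
      _ = #(g.biUnion fun x => extensions P (insert (j, x) S) J) := by
        rw [card_biUnion hdisj, Nat.cast_sum]
      _ ≤ #(extensions P S (insert j J)) := Nat.cast_le.2 (card_le_card hsub)

end Counting

theorem spansClique_insert_of_image_fst_eq {t n k : ℕ} {H : Finset (Finset (Fin t × Fin n))}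
    {T : Finset (Fin t × Fin n)} (hT : Legal T) {w : Fin t × Fin n}
    (himg : T.image Prod.fst = univ.erase w.1) (hc : IsCliqueSet k H (insert w T)) :
    SpansClique t n k H (insert w T) := by
  have hw : ∀ y ∈ T, y.1 ≠ w.1 := fun y hy => ne_of_mem_erase (himg ▸ mem_image_of_mem _ hy)
  refine ⟨?_, hT.insert hw, hc⟩
  rw [card_insert_of_notMem fun h => hw w h rfl, hT.card_eq_of_image_fst_eq himg]
  have := w.1.pos
  omega

theorem stmt4_general (t n k : ℕ) (hk : 3 ≤ k) (hkt : k ≤ t) (γ : ℝ) (hγ : 0 < γ)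
    (H : Finset (Finset (Fin t × Fin n)))
    (hδ : CodegGE t n k H
      ((1 - (((t - 2).choose (k - 1) : ℝ) + 2 * ((t - 2).choose (k - 2) : ℝ))⁻¹ + γ) * n)) :
    ∀ i : Fin t, ∀ u v : Fin t × Fin n, u.1 = i → v.1 = i → u ≠ v →
      (γ * n) ^ (t - 1) ≤
        ((Finset.univ.filter (fun T : Finset (Fin t × Fin n) =>
          T.card = t - 1 ∧ Legal T ∧ (∀ x ∈ T, x.1 ≠ i) ∧
          SpansClique t n k H (insert u T) ∧
          SpansClique t n k H (insert v T))).card : ℝ) := by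
  intro i u v hu hv _
  set D : ℝ := ((t - 2).choose (k - 1) : ℝ) + 2 * ((t - 2).choose (k - 2) : ℝ)
  have hD : 1 ≤ D := by
    have : 1 ≤ (t - 2).choose (k - 2) := Nat.choose_pos (by omega)
    have : (1 : ℝ) ≤ (t - 2).choose (k - 2) := by exact_mod_cast this
    linarith [(Nat.cast_nonneg _ : (0 : ℝ) ≤ (t - 2).choose (k - 1))]
  have hδn : (1 - D⁻¹ + γ) * n ≤ n := by
    rcases n.eq_zero_or_pos with rfl | hn
    · simp
    · exact hδ.le_card (by omega) hn
  have hext : ∀ S, IsCommonExt k H i u v S → ∀ j ∈ univ.erase i, (∀ x ∈ S, x.1 ≠ j) →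
      γ * n ≤ #{x | IsCommonExt k H i u v (insert (j, x) S)} := by
    intro S hS j hj hSj
    refine le_trans ?_ (sub_mul_le_card_filter_isCommonExt_insert (by omega) hδ hδn
      (ne_of_mem_erase hj) hu hv hS hSj)
    have : (n : ℝ) - D * (n - (1 - D⁻¹ + γ) * n) = D * (γ * n) := by
      field_simp
      ring
    rw [this]
    exact le_mul_of_one_le_left (by positivity) hD
  have hcount := pow_card_le_card_extensions _ (fun S hS => hS.1) (by positivity) _ hext ∅
    (isCommonExt_empty (by omega) i u v) (by simp)
  rw [card_erase_of_mem (mem_univ i), card_univ, Fintype.card_fin] at hcount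
  refine hcount.trans (Nat.cast_le.2 (card_le_card fun T hT => ?_))
  obtain ⟨-, ⟨hTl, hTi, hTu, hTv⟩, -, himg⟩ := mem_filter.1 hT
  rw [image_empty, empty_union] at himg
  exact mem_filter.2 ⟨mem_univ T, hTl.card_eq_of_image_fst_eq himg, hTl, hTi,
    spansClique_insert_of_image_fst_eq hTl (hu ▸ himg) hTu,
    spansClique_insert_of_image_fst_eq hTl (hv ▸ himg) hTv⟩

/-- Proposition 3.1: any two vertices of the same class have many common extensions
to copies of `K_t^k`. -/
theorem stmt4 (t n k : ℕ) (hk : 3 ≤ k) (hkt : k ≤ t) (γ : ℝ) (hγ : 0 < γ)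
    (H : Finset (Finset (Fin t × Fin n))) (hH : IsPartiteKGraph t n k H)
    (hδ : CodegGE t n k H
      ((1 - (((t - 2).choose (k - 1) : ℝ) + 2 * ((t - 2).choose (k - 2) : ℝ))⁻¹ + γ) * n)) :
    ∀ i : Fin t, ∀ u v : Fin t × Fin n, u.1 = i → v.1 = i → u ≠ v →
      (γ * n) ^ (t - 1) ≤
        ((Finset.univ.filter (fun T : Finset (Fin t × Fin n) =>
          T.card = t - 1 ∧ Legal T ∧ (∀ x ∈ T, x.1 ≠ i) ∧
          SpansClique t n k H (insert u T) ∧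
          SpansClique t n k H (insert v T))).card : ℝ) :=
  stmt4_general t n k hk hkt γ hγ H hδ
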